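/- Let Φ be an Orlicz function with Matuzewska–Orlicz indices satisfying 1 < p_Φ ≤ q_Φ < ∞. Then there exists a constant C, depending only on Φ, such that for every nonincreasing function g : (0,∞) → [0,∞), ∫₀^∞ Φ(g(t)) dt ≤ ∫₀^∞ Φ(t⁻¹ ∫₀^t g(s) ds) dt ≤ C ∫₀^∞ Φ(g(t)) dt (the inequalities holding in [0,∞]). -/

import Mathlib

/-!
The indices give two scaling properties of `Φ`. Since `q_Φ < ∞`, `M(t,Φ)` is finite for large
`t`; this forces `Φ > 0` on `(0,∞)` and gives the `Δ₂`-condition `Φ(2x) ≤ D Φ(x)`. Since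
`p_Φ > 1`, `Φ(lx) ≤ l^p Φ(x)` for small `l` and some `p > 1`, hence `Φ(2rx) ≤ r Φ(x)` for some
`r ∈ (0,1)`.

Write `Ag(t) = t⁻¹ ∫₀^t g`. For nonincreasing `g` we have `g ≤ Ag`, which is the left
inequality. Splitting `∫₀^t g` at `rt` gives `Ag(t) ≤ r Ag(rt) + (1-r) g(rt)`, and convexity turns
this into `2 Φ(Ag(t)) ≤ r Φ(Ag(rt)) + D Φ(g(rt))`. Integrating over `(0,R)` and substituting
`u = rt` yields `2J ≤ J + (D/r) ∫ Φ(g)` for `J = ∫₀^R Φ(Ag)`. When `g` is bounded, `J` is finite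
and can be cancelled; truncating `g` at height `n` and letting `n → ∞` removes the bound.
-/

open MeasureTheory Filter Set ENNReal

/-- An Orlicz function: continuous, increasing and convex on `[0,∞)`, vanishing at `0`,
and tending to `∞` at `∞`. -/
structure IsOrliczFunction (Φ : ℝ → ℝ) : Prop where
  map_zero : Φ 0 = 0
  continuousOn : ContinuousOn Φ (Set.Ici 0)
  monotoneOn : MonotoneOn Φ (Set.Ici 0)
  convexOn : ConvexOn ℝ (Set.Ici 0) Φ
  tendsto_atTop : Filter.Tendsto Φ Filter.atTop Filter.atTop

/-- The `Δ₂`-condition: `Φ(2t) ≤ C Φ(t)` for all `t ≥ 0` and some constant `C > 0`. -/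
def Delta2 (Φ : ℝ → ℝ) : Prop :=
  ∃ C : ℝ, 0 < C ∧ ∀ t : ℝ, 0 ≤ t → Φ (2 * t) ≤ C * Φ t

/-- `M(t,Φ) = sup_{s>0} Φ(ts)/Φ(s)`. -/
noncomputable def orliczM (Φ : ℝ → ℝ) (t : ℝ) : ℝ :=
  sSup {r : ℝ | ∃ s : ℝ, 0 < s ∧ r = Φ (t * s) / Φ s}

/-- `p` and `q` are the Matuzewska–Orlicz indices of `Φ`:
`p = lim_{t→0⁺} log M(t,Φ)/log t` and `q = lim_{t→∞} log M(t,Φ)/log t`. -/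
def HasMatuzewskaOrliczIndices (Φ : ℝ → ℝ) (p q : ℝ) : Prop :=
  Filter.Tendsto (fun t : ℝ => Real.log (orliczM Φ t) / Real.log t)
      (nhdsWithin 0 (Set.Ioi 0)) (nhds p) ∧
  Filter.Tendsto (fun t : ℝ => Real.log (orliczM Φ t) / Real.log t)
      Filter.atTop (nhds q)

/-- Extension of an Orlicz function to `[0,∞]`, sending `∞` to `∞`. -/
noncomputable def orliczExt (Φ : ℝ → ℝ) (x : ℝ≥0∞) : ℝ≥0∞ :=
  if x = ⊤ then ⊤ else ENNReal.ofReal (Φ x.toReal)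

/-- The averaging (Hardy) operator `t ↦ t⁻¹ ∫₀^t g(s) ds`, with values in `[0,∞]`. -/
noncomputable def hardyAvg (g : ℝ → ℝ) (t : ℝ) : ℝ≥0∞ :=
  (ENNReal.ofReal t)⁻¹ * ∫⁻ s in Set.Ioc (0:ℝ) t, ENNReal.ofReal (g s)

open Topology

lemma orliczExt_ofReal {Φ : ℝ → ℝ} {x : ℝ} (hx : 0 ≤ x) :
    orliczExt Φ (ENNReal.ofReal x) = ENNReal.ofReal (Φ x) := by
  rw [orliczExt, if_neg ofReal_ne_top, toReal_ofReal hx]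

lemma orliczExt_ne_top {Φ : ℝ → ℝ} {a : ℝ≥0∞} (ha : a ≠ ⊤) : orliczExt Φ a ≠ ⊤ := by
  simp [orliczExt, ha]

-- `orliczM Φ t` is definitionally `sSup (orliczRatios Φ t)`.
def orliczRatios (Φ : ℝ → ℝ) (t : ℝ) : Set ℝ := {r | ∃ s : ℝ, 0 < s ∧ r = Φ (t * s) / Φ s}

lemma map_mul_le_orliczM_mul {Φ : ℝ → ℝ} {t s : ℝ} (hb : BddAbove (orliczRatios Φ t))
    (hs : 0 < s) (hΦs : 0 < Φ s) : Φ (t * s) ≤ orliczM Φ t * Φ s :=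
  (div_le_iff₀ hΦs).1 (le_csSup hb ⟨s, hs, rfl⟩)

lemma eventually_bddAbove_orliczRatios {Φ : ℝ → ℝ} {q : ℝ}
    (hq : Tendsto (fun t => Real.log (orliczM Φ t) / Real.log t) atTop (𝓝 q)) (hq0 : q ≠ 0) :
    ∀ᶠ t in atTop, BddAbove (orliczRatios Φ t) := by
  filter_upwards [hq.eventually_ne hq0] with t ht
  by_contra hb
  -- Where the ratios are unbounded, `orliczM Φ t` is the junk value `sSup = 0`, so `log 0 / _ = 0`.
  have hM : orliczM Φ t = 0 := Real.sSup_of_not_bddAbove hb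
  simp [hM] at ht

namespace IsOrliczFunction

variable {Φ : ℝ → ℝ} (hΦ : IsOrliczFunction Φ)
include hΦ

lemma nonneg {x : ℝ} (hx : 0 ≤ x) : 0 ≤ Φ x := by
  simpa [hΦ.map_zero] using hΦ.monotoneOn (mem_Ici.2 le_rfl) hx hx

lemma monotone_orliczExt : Monotone (orliczExt Φ) := by
  intro a b hab
  rcases eq_or_ne b ⊤ with rfl | hb
  · simp [orliczExt]
  rw [orliczExt, orliczExt, if_neg (ne_top_of_le_ne_top hb hab), if_neg hb]
  exact ofReal_le_ofReal (hΦ.monotoneOn toReal_nonneg toReal_nonneg (toReal_mono hb hab))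

lemma surjective_orliczExt : Function.Surjective (orliczExt Φ) := by
  intro y
  rcases eq_or_ne y ⊤ with rfl | hy
  · exact ⟨⊤, if_pos rfl⟩
  obtain ⟨X, hX⟩ := (hΦ.tendsto_atTop.eventually_ge_atTop y.toReal).exists_forall_of_atTop
  obtain ⟨x, hx, hΦx⟩ := intermediate_value_Icc (le_max_right X 0)
    (hΦ.continuousOn.mono Icc_subset_Ici_self)
    ⟨by rw [hΦ.map_zero]; exact toReal_nonneg, hX _ (le_max_left _ _)⟩
  exact ⟨ENNReal.ofReal x, by rw [orliczExt_ofReal hx.1, hΦx, ofReal_toReal hy]⟩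

lemma orliczExt_iSup {ι : Sort*} (a : ι → ℝ≥0∞) :
    orliczExt Φ (⨆ i, a i) = ⨆ i, orliczExt Φ (a i) :=
  hΦ.monotone_orliczExt.map_iSup_of_continuousAt
    (hΦ.monotone_orliczExt.continuous_of_surjective hΦ.surjective_orliczExt).continuousAt
    (by simpa [hΦ.map_zero] using orliczExt_ofReal (Φ := Φ) le_rfl)

lemma map_mul_le_orliczM_mul_of_le_one {t s : ℝ} (ht0 : 0 ≤ t) (ht1 : t ≤ 1) (hs : 0 ≤ s) :
    Φ (t * s) ≤ orliczM Φ t * Φ s := by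
  have hle : ∀ {s}, 0 ≤ s → Φ (t * s) ≤ Φ s := fun hs =>
    hΦ.monotoneOn (mul_nonneg ht0 hs) hs (mul_le_of_le_one_left hs ht1)
  rcases (hΦ.nonneg hs).eq_or_lt with hΦs | hΦs
  · rw [← hΦs, mul_zero]
    exact hΦs ▸ hle hs
  have hb : BddAbove (orliczRatios Φ t) := by
    refine ⟨1, ?_⟩
    rintro _ ⟨u, hu, rfl⟩
    exact div_le_one_of_le₀ (hle hu.le) (hΦ.nonneg hu.le)
  exact map_mul_le_orliczM_mul hb (hs.lt_of_ne (by rintro rfl; simp [hΦ.map_zero] at hΦs)) hΦs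

lemma not_bddAbove_orliczRatios {a t : ℝ} (ha : 0 < a) (hΦa : Φ a = 0) (ht : 1 < t) :
    ¬ BddAbove (orliczRatios Φ t) := by
  rintro ⟨B, hB⟩
  let Z := Ici (0 : ℝ) ∩ Φ ⁻¹' {0}
  have hZ : IsClosed Z :=
    hΦ.continuousOn.preimage_isClosed_of_isClosed isClosed_Ici isClosed_singleton
  obtain ⟨X, hX⟩ := (hΦ.tendsto_atTop.eventually_gt_atTop 0).exists_forall_of_atTop
  have hZX : BddAbove Z := ⟨X, fun x hx => not_lt.1 fun hXx => (hX x hXx.le).ne' hx.2⟩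
  -- `c` is the largest zero of `Φ`: `Φ s → 0` as `s ↓ c`, while `Φ (t * s) ≥ Φ (t * c) > 0`.
  let c := sSup Z
  have hcZ : c ∈ Z := hZ.csSup_mem ⟨a, ha.le, hΦa⟩ hZX
  have hc0 : 0 ≤ c := hcZ.1
  have hΦc : Φ c = 0 := hcZ.2
  have hac : a ≤ c := le_csSup hZX ⟨ha.le, hΦa⟩
  have hΦpos : ∀ y, c < y → 0 < Φ y := fun y hy => (hΦ.nonneg (hc0.trans hy.le)).lt_of_ne
    fun h => hy.not_ge (le_csSup hZX ⟨hc0.trans hy.le, h.symm⟩)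
  have hlim : Tendsto Φ (𝓝[>] c) (𝓝 0) := by
    rw [← hΦc]
    exact ((hΦ.continuousOn c hc0).mono fun y hy => hc0.trans (le_of_lt hy)).tendsto
  have htc : 0 < Φ (t * c) := hΦpos _ (lt_mul_of_one_lt_left (ha.trans_le hac) ht)
  obtain ⟨s, hs, hcs⟩ := (((hlim.mul_const B).eventually_lt_const (by simpa using htc)).and
    self_mem_nhdsWithin).exists
  have hs0 : 0 < s := (ha.trans_le hac).trans hcs
  have hts : Φ (t * c) ≤ Φ (t * s) :=
    hΦ.monotoneOn (mem_Ici.2 (by positivity)) (mem_Ici.2 (by positivity)) (by gcongr)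
  have := (div_le_iff₀ (hΦpos s hcs)).1 (hB ⟨s, hs0, rfl⟩)
  linarith

lemma pos {q : ℝ}
    (hq : Tendsto (fun t => Real.log (orliczM Φ t) / Real.log t) atTop (𝓝 q)) (hq0 : q ≠ 0)
    {x : ℝ} (hx : 0 < x) : 0 < Φ x := by
  obtain ⟨t, hb, ht⟩ :=
    ((eventually_bddAbove_orliczRatios hq hq0).and (eventually_gt_atTop 1)).exists
  exact (hΦ.nonneg hx.le).lt_of_ne fun h => hΦ.not_bddAbove_orliczRatios hx h.symm ht hb

lemma delta2 {q : ℝ}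
    (hq : Tendsto (fun t => Real.log (orliczM Φ t) / Real.log t) atTop (𝓝 q)) (hq0 : q ≠ 0) :
    Delta2 Φ := by
  obtain ⟨t, hb, ht⟩ :=
    ((eventually_bddAbove_orliczRatios hq hq0).and (eventually_ge_atTop 2)).exists
  have hpos {x : ℝ} (hx : 0 < x) : 0 < Φ x := hΦ.pos hq hq0 hx
  refine ⟨orliczM Φ t, ?_, fun x hx => ?_⟩
  · exact (div_pos (hpos (by linarith)) (hpos one_pos)).trans_le (le_csSup hb ⟨1, one_pos, rfl⟩)
  rcases hx.eq_or_lt with rfl | hx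
  · simp [hΦ.map_zero]
  calc Φ (2 * x) ≤ Φ (t * x) :=
        hΦ.monotoneOn (mem_Ici.2 (by positivity)) (mem_Ici.2 (by positivity)) (by gcongr)
    _ ≤ orliczM Φ t * Φ x := map_mul_le_orliczM_mul hb hx (hpos hx)

lemma eventually_map_mul_le_rpow {pΦ p : ℝ}
    (hp : Tendsto (fun t => Real.log (orliczM Φ t) / Real.log t) (𝓝[>] 0) (𝓝 pΦ))
    (hlt : p < pΦ) : ∀ᶠ l in 𝓝[>] 0, ∀ x, 0 ≤ x → Φ (l * x) ≤ l ^ p * Φ x := by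
  filter_upwards [hp.eventually_const_lt hlt, Ioo_mem_nhdsGT one_pos] with l hl ⟨hl0, hl1⟩ x hx
  have hM : orliczM Φ l ≤ l ^ p := by
    have hM0 : 0 ≤ orliczM Φ l := Real.sSup_nonneg <| by
      rintro _ ⟨s, hs, rfl⟩
      exact div_nonneg (hΦ.nonneg (by positivity)) (hΦ.nonneg hs.le)
    rcases hM0.eq_or_lt with hM0 | hM0
    · rw [← hM0]
      positivity
    rw [lt_div_iff_of_neg (Real.log_neg hl0 hl1), ← Real.log_rpow hl0] at hl
    exact ((Real.log_lt_log_iff hM0 (by positivity)).1 hl).le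
  calc Φ (l * x) ≤ orliczM Φ l * Φ x := hΦ.map_mul_le_orliczM_mul_of_le_one hl0.le hl1.le hx
    _ ≤ l ^ p * Φ x := mul_le_mul_of_nonneg_right hM (hΦ.nonneg hx)

lemma exists_contraction {pΦ : ℝ}
    (hp : Tendsto (fun t => Real.log (orliczM Φ t) / Real.log t) (𝓝[>] 0) (𝓝 pΦ))
    (h1 : 1 < pΦ) : ∃ r, 0 < r ∧ r < 1 ∧ ∀ x, 0 ≤ x → Φ (2 * r * x) ≤ r * Φ x := by
  obtain ⟨p, hp1, hppΦ⟩ := exists_between h1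
  have hsmall : ∀ᶠ l in 𝓝[>] (0 : ℝ), l ^ (p - 1) < 1 / 2 := by
    have hcont := Real.continuousAt_rpow_const 0 (p - 1) (Or.inr (by linarith))
    rw [ContinuousAt, Real.zero_rpow (by linarith)] at hcont
    exact (hcont.mono_left nhdsWithin_le_nhds).eventually_lt_const (by norm_num)
  obtain ⟨l, ⟨hΦl, hl⟩, hl0, hl1⟩ := (((hΦ.eventually_map_mul_le_rpow hp hppΦ).and hsmall).and
    (Ioo_mem_nhdsGT one_pos)).exists
  refine ⟨l / 2, by linarith, by linarith, fun x hx => ?_⟩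
  calc Φ (2 * (l / 2) * x) = Φ (l * x) := by ring_nf
    _ ≤ l ^ p * Φ x := hΦl x hx
    _ = l ^ (p - 1) * l * Φ x := by rw [Real.rpow_sub_one hl0.ne', div_mul_cancel₀ _ hl0.ne']
    _ ≤ 1 / 2 * l * Φ x := by gcongr; exact hΦ.nonneg hx
    _ = l / 2 * Φ x := by ring

lemma two_mul_map_add_le {r D a b : ℝ} (hr0 : 0 ≤ r) (hr1 : r ≤ 1)
    (hcontract : ∀ x, 0 ≤ x → Φ (2 * r * x) ≤ r * Φ x) (hD : ∀ x, 0 ≤ x → Φ (2 * x) ≤ D * Φ x)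
    (ha : 0 ≤ a) (hb : 0 ≤ b) :
    2 * Φ (r * a + (1 - r) * b) ≤ r * Φ a + D * Φ b := by
  have hmid := hΦ.convexOn.2 (mem_Ici.2 (by positivity : 0 ≤ 2 * r * a))
    (mem_Ici.2 (by positivity : 0 ≤ 2 * b)) (by norm_num : (0 : ℝ) ≤ 1 / 2)
    (by norm_num : (0 : ℝ) ≤ 1 / 2) (by norm_num)
  simp only [smul_eq_mul] at hmid
  calc 2 * Φ (r * a + (1 - r) * b) ≤ 2 * Φ (1 / 2 * (2 * r * a) + 1 / 2 * (2 * b)) := by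
        gcongr
        exact hΦ.monotoneOn (mem_Ici.2 (by nlinarith)) (mem_Ici.2 (by positivity)) (by nlinarith)
    _ ≤ Φ (2 * r * a) + Φ (2 * b) := by linarith
    _ ≤ r * Φ a + D * Φ b := add_le_add (hcontract a ha) (hD b hb)

end IsOrliczFunction

section HardyAverage

variable {g : ℝ → ℝ} {t : ℝ}

lemma setLIntegral_Ioc_comp_mul_left (F : ℝ → ℝ≥0∞) {r : ℝ} (hr : 0 < r) (R : ℝ) :
    ∫⁻ t in Ioc 0 R, F (r * t) = ENNReal.ofReal r⁻¹ * ∫⁻ u in Ioc 0 (r * R), F u := by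
  have hemb : MeasurableEmbedding (r * ·) := (Homeomorph.mulLeft₀ r hr.ne').measurableEmbedding
  have hpre : (r * ·) ⁻¹' Ioc 0 (r * R) = Ioc 0 R := by
    rw [preimage_const_mul_Ioc₀ _ _ hr, zero_div, mul_div_cancel_left₀ _ hr.ne']
  rw [← hpre, ← hemb.lintegral_map, ← hemb.restrict_map, Real.map_volume_mul_left hr.ne',
    Measure.restrict_smul, lintegral_smul_measure, abs_of_pos (inv_pos.2 hr), smul_eq_mul]

lemma lintegral_Ioc_eq_ofReal_mul_hardyAvg (ht : 0 < t) :
    ∫⁻ s in Ioc 0 t, ENNReal.ofReal (g s) = ENNReal.ofReal t * hardyAvg g t := by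
  rw [hardyAvg, ← mul_assoc, ENNReal.mul_inv_cancel (ofReal_pos.2 ht).ne' ofReal_ne_top, one_mul]

lemma hardyAvg_eq_lintegral (ht : 0 < t) :
    hardyAvg g t = ∫⁻ u in Ioc 0 1, ENNReal.ofReal (g (t * u)) := by
  rw [setLIntegral_Ioc_comp_mul_left (fun s => ENNReal.ofReal (g s)) ht, mul_one, hardyAvg,
    ofReal_inv_of_pos ht]

lemma hardyAvg_antitoneOn (hg : AntitoneOn g (Ioi 0)) : AntitoneOn (hardyAvg g) (Ioi 0) := by
  intro t₁ ht₁ t₂ ht₂ h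
  rw [hardyAvg_eq_lintegral ht₁, hardyAvg_eq_lintegral ht₂]
  refine setLIntegral_mono' measurableSet_Ioc fun u hu => ofReal_le_ofReal ?_
  exact hg (mul_pos ht₁ hu.1) (mul_pos (ht₁.trans_le h) hu.1) (by gcongr; exact hu.1.le)

lemma ofReal_le_hardyAvg (hg : AntitoneOn g (Ioi 0)) (ht : 0 < t) :
    ENNReal.ofReal (g t) ≤ hardyAvg g t := by
  rw [hardyAvg_eq_lintegral ht]
  calc ENNReal.ofReal (g t) = ∫⁻ _ in Ioc (0 : ℝ) 1, ENNReal.ofReal (g t) := by simp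
    _ ≤ _ := setLIntegral_mono' measurableSet_Ioc fun u hu => ofReal_le_ofReal <|
      hg (mul_pos ht hu.1) ht (mul_le_of_le_one_right ht.le hu.2)

lemma hardyAvg_le_ofReal {n : ℝ} (hn : ∀ s ∈ Ioi (0 : ℝ), g s ≤ n) (ht : 0 < t) :
    hardyAvg g t ≤ ENNReal.ofReal n := by
  rw [hardyAvg_eq_lintegral ht]
  calc _ ≤ ∫⁻ _ in Ioc (0 : ℝ) 1, ENNReal.ofReal n :=
        setLIntegral_mono' measurableSet_Ioc fun u hu => ofReal_le_ofReal (hn _ (mul_pos ht hu.1))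
    _ = _ := by simp

lemma hardyAvg_mono {f : ℝ → ℝ} (h : ∀ s, f s ≤ g s) : hardyAvg f t ≤ hardyAvg g t := by
  unfold hardyAvg
  gcongr with s
  exact h s

lemma hardyAvg_le_add (hg : AntitoneOn g (Ioi 0)) (ht : 0 < t) {r : ℝ} (hr0 : 0 < r)
    (hr1 : r ≤ 1) :
    hardyAvg g t ≤ ENNReal.ofReal r * hardyAvg g (r * t) +
      ENNReal.ofReal (1 - r) * ENNReal.ofReal (g (r * t)) := by
  have hrt : 0 < r * t := mul_pos hr0 ht
  have htail : ∫⁻ s in Ioc (r * t) t, ENNReal.ofReal (g s) ≤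
      ∫⁻ _ in Ioc (r * t) t, ENNReal.ofReal (g (r * t)) :=
    setLIntegral_mono' measurableSet_Ioc fun s hs =>
      ofReal_le_ofReal (hg hrt (hrt.trans hs.1) hs.1.le)
  rw [setLIntegral_const, Real.volume_Ioc] at htail
  rw [← ENNReal.mul_le_mul_iff_right (ofReal_pos.2 ht).ne' ofReal_ne_top,
    ← lintegral_Ioc_eq_ofReal_mul_hardyAvg ht,
    ← Ioc_union_Ioc_eq_Ioc hrt.le (mul_le_of_le_one_left ht.le hr1),
    lintegral_union measurableSet_Ioc (Ioc_disjoint_Ioc_of_le le_rfl),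
    lintegral_Ioc_eq_ofReal_mul_hardyAvg hrt]
  calc _ ≤ ENNReal.ofReal (r * t) * hardyAvg g (r * t) +
        ENNReal.ofReal (g (r * t)) * ENNReal.ofReal (t - r * t) := by gcongr
    _ = _ := by
      rw [mul_add, ← mul_assoc, ← mul_assoc, ← ofReal_mul ht.le, ← ofReal_mul ht.le,
        mul_comm t r, mul_one_sub, mul_comm t r, mul_comm (ENNReal.ofReal (g _))]

lemma ofReal_eq_iSup_ofReal_min (x : ℝ) : ENNReal.ofReal x = ⨆ n : ℕ, ENNReal.ofReal (min x n) :=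
  le_antisymm (le_iSup_of_le ⌈x⌉₊ (by rw [min_eq_left (Nat.le_ceil x)]))
    (iSup_le fun _ => ofReal_le_ofReal (min_le_left _ _))

lemma hardyAvg_eq_iSup_min (hg : AntitoneOn g (Ioi 0)) :
    hardyAvg g t = ⨆ n : ℕ, hardyAvg (fun s => min (g s) n) t := by
  have hmeas : AEMeasurable g (volume.restrict (Ioi 0)) :=
    aemeasurable_restrict_of_antitoneOn measurableSet_Ioi hg
  simp only [hardyAvg, ← ENNReal.mul_iSup]
  rw [← lintegral_iSup']
  · simp only [← ofReal_eq_iSup_ofReal_min]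
  · exact fun n => ((hmeas.min aemeasurable_const).ennreal_ofReal).mono_measure
      (Measure.restrict_mono Ioc_subset_Ioi_self le_rfl)
  · exact ae_of_all _ fun s m n hmn => ofReal_le_ofReal (min_le_min_left _ (Nat.cast_le.2 hmn))

end HardyAverage

namespace IsOrliczFunction

variable {Φ : ℝ → ℝ} (hΦ : IsOrliczFunction Φ) {g : ℝ → ℝ}
include hΦ

lemma antitoneOn_orliczExt_hardyAvg (hg : AntitoneOn g (Ioi 0)) :
    AntitoneOn (fun t => orliczExt Φ (hardyAvg g t)) (Ioi 0) :=
  hΦ.monotone_orliczExt.comp_antitoneOn (hardyAvg_antitoneOn hg)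

lemma lintegral_le_lintegral_orliczExt_hardyAvg (hg0 : ∀ s ∈ Ioi (0 : ℝ), 0 ≤ g s)
    (hg : AntitoneOn g (Ioi 0)) :
    ∫⁻ t in Ioi 0, ENNReal.ofReal (Φ (g t)) ≤ ∫⁻ t in Ioi 0, orliczExt Φ (hardyAvg g t) :=
  setLIntegral_mono' measurableSet_Ioi fun t ht => by
    rw [← orliczExt_ofReal (hg0 t ht)]
    exact hΦ.monotone_orliczExt (ofReal_le_hardyAvg hg ht)

section Contraction

variable {r D : ℝ} (hr0 : 0 < r) (hr1 : r ≤ 1)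
  (hcontract : ∀ x, 0 ≤ x → Φ (2 * r * x) ≤ r * Φ x) (hD0 : 0 ≤ D)
  (hD : ∀ x, 0 ≤ x → Φ (2 * x) ≤ D * Φ x)
include hr0 hr1 hcontract hD0 hD

lemma two_mul_orliczExt_hardyAvg_le (hg0 : ∀ s ∈ Ioi (0 : ℝ), 0 ≤ g s)
    (hg : AntitoneOn g (Ioi 0)) {t : ℝ} (ht : 0 < t) :
    2 * orliczExt Φ (hardyAvg g t) ≤ ENNReal.ofReal r * orliczExt Φ (hardyAvg g (r * t)) +
      ENNReal.ofReal D * ENNReal.ofReal (Φ (g (r * t))) := by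
  have hb : 0 ≤ g (r * t) := hg0 _ (mul_pos hr0 ht)
  rcases eq_or_ne (hardyAvg g (r * t)) ⊤ with htop | hfin
  · simp [htop, orliczExt, hr0]
  set a := (hardyAvg g (r * t)).toReal
  have ha : 0 ≤ a := toReal_nonneg
  have havg : hardyAvg g t ≤ ENNReal.ofReal (r * a + (1 - r) * g (r * t)) := by
    rw [ofReal_add (by positivity) (mul_nonneg (by linarith) hb), ofReal_mul hr0.le,
      ofReal_mul (by linarith), ofReal_toReal hfin]
    exact hardyAvg_le_add hg ht hr0 hr1
  rw [← ofReal_toReal hfin, orliczExt_ofReal ha]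
  calc 2 * orliczExt Φ (hardyAvg g t)
      ≤ 2 * ENNReal.ofReal (Φ (r * a + (1 - r) * g (r * t))) := by
        rw [← orliczExt_ofReal (by nlinarith)]
        gcongr
        exact hΦ.monotone_orliczExt havg
    _ ≤ ENNReal.ofReal (r * Φ a + D * Φ (g (r * t))) := by
        rw [← ofReal_ofNat, ← ofReal_mul (by norm_num)]
        exact ofReal_le_ofReal (hΦ.two_mul_map_add_le hr0.le hr1 hcontract hD ha hb)
    _ = _ := by
        rw [ofReal_add (mul_nonneg hr0.le (hΦ.nonneg ha)) (mul_nonneg hD0 (hΦ.nonneg hb)),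
          ofReal_mul hr0.le, ofReal_mul hD0]

lemma lintegral_Ioc_orliczExt_hardyAvg_le (hg0 : ∀ s ∈ Ioi (0 : ℝ), 0 ≤ g s)
    (hg : AntitoneOn g (Ioi 0)) {n : ℝ} (hn : ∀ s ∈ Ioi (0 : ℝ), g s ≤ n) (R : ℝ) :
    ∫⁻ t in Ioc 0 R, orliczExt Φ (hardyAvg g t) ≤
      ENNReal.ofReal (D / r) * ∫⁻ t in Ioi 0, ENNReal.ofReal (Φ (g t)) := by
  set F := fun t => orliczExt Φ (hardyAvg g t)
  set S := ∫⁻ t in Ioi 0, ENNReal.ofReal (Φ (g t))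
  set J := ∫⁻ t in Ioc 0 R, F t
  -- The bound on `g` makes `J` finite, so that it can be cancelled from `2 * J ≤ J + D / r * S`.
  have hJ : J ≠ ⊤ := by
    refine ne_top_of_le_ne_top (b := ∫⁻ _ in Ioc 0 R, orliczExt Φ (ENNReal.ofReal n)) ?_ ?_
    · rw [setLIntegral_const, Real.volume_Ioc]
      exact mul_ne_top (orliczExt_ne_top ofReal_ne_top) ofReal_ne_top
    · exact setLIntegral_mono' measurableSet_Ioc fun t ht =>
        hΦ.monotone_orliczExt (hardyAvg_le_ofReal hn ht.1)
  have hFr : AEMeasurable (fun t => F (r * t)) (volume.restrict (Ioc 0 R)) := by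
    refine (aemeasurable_restrict_of_antitoneOn measurableSet_Ioi ?_).mono_measure
      (Measure.restrict_mono Ioc_subset_Ioi_self le_rfl)
    exact fun t₁ h₁ t₂ h₂ h => hΦ.antitoneOn_orliczExt_hardyAvg hg (mul_pos hr0 h₁)
      (mul_pos hr0 h₂) (by gcongr)
  have hsub : Ioc 0 (r * R) ⊆ Ioc 0 R := fun t ht => ⟨ht.1, ht.2.trans
    (mul_le_of_le_one_left (pos_of_mul_pos_right (ht.1.trans_le ht.2) hr0.le).le hr1)⟩
  have h2J : J + J ≤ J + ENNReal.ofReal (D / r) * S := calc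
    J + J = ∫⁻ t in Ioc 0 R, 2 * F t := by rw [← two_mul, lintegral_const_mul' _ _ ofNat_ne_top]
    _ ≤ ∫⁻ t in Ioc 0 R,
          (ENNReal.ofReal r * F (r * t) + ENNReal.ofReal D * ENNReal.ofReal (Φ (g (r * t)))) :=
        setLIntegral_mono' measurableSet_Ioc fun t ht =>
          hΦ.two_mul_orliczExt_hardyAvg_le hr0 hr1 hcontract hD0 hD hg0 hg ht.1
    _ = ENNReal.ofReal r * ENNReal.ofReal r⁻¹ * (∫⁻ t in Ioc 0 (r * R), F t) +
          ENNReal.ofReal (D / r) * ∫⁻ t in Ioc 0 (r * R), ENNReal.ofReal (Φ (g t)) := by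
        rw [lintegral_add_left' (hFr.const_mul _), lintegral_const_mul' _ _ ofReal_ne_top,
          lintegral_const_mul' _ _ ofReal_ne_top, setLIntegral_Ioc_comp_mul_left F hr0,
          setLIntegral_Ioc_comp_mul_left (fun s => ENNReal.ofReal (Φ (g s))) hr0, ← mul_assoc,
          ← mul_assoc, ← ofReal_mul hD0, div_eq_mul_inv]
    _ ≤ J + ENNReal.ofReal (D / r) * S := by
        rw [← ofReal_mul hr0.le, mul_inv_cancel₀ hr0.ne', ofReal_one, one_mul]
        gcongr
        · exact lintegral_mono_set hsub
        · exact lintegral_mono_set Ioc_subset_Ioi_self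
  exact ENNReal.le_of_add_le_add_left hJ h2J

lemma lintegral_orliczExt_hardyAvg_le_of_bounded (hg0 : ∀ s ∈ Ioi (0 : ℝ), 0 ≤ g s)
    (hg : AntitoneOn g (Ioi 0)) {n : ℝ} (hn : ∀ s ∈ Ioi (0 : ℝ), g s ≤ n) :
    ∫⁻ t in Ioi 0, orliczExt Φ (hardyAvg g t) ≤
      ENNReal.ofReal (D / r) * ∫⁻ t in Ioi 0, ENNReal.ofReal (Φ (g t)) := by
  have hU : ⋃ k : ℕ, Ioc (0 : ℝ) k = Ioi 0 :=
    iUnion_Ioc_eq_Ioi_self_iff.2 fun x _ => exists_nat_ge x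
  have hsup := setLIntegral_iUnion_of_directed (μ := volume)
    (fun t => orliczExt Φ (hardyAvg g t)) (s := fun k : ℕ => Ioc (0 : ℝ) k)
    (Monotone.directed_le fun m n h => Ioc_subset_Ioc_right (Nat.cast_le.2 h))
  rw [hU] at hsup
  rw [hsup]
  exact iSup_le fun k =>
    hΦ.lintegral_Ioc_orliczExt_hardyAvg_le hr0 hr1 hcontract hD0 hD hg0 hg hn k

lemma lintegral_orliczExt_hardyAvg_le (hg0 : ∀ s ∈ Ioi (0 : ℝ), 0 ≤ g s)
    (hg : AntitoneOn g (Ioi 0)) :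
    ∫⁻ t in Ioi 0, orliczExt Φ (hardyAvg g t) ≤
      ENNReal.ofReal (D / r) * ∫⁻ t in Ioi 0, ENNReal.ofReal (Φ (g t)) := by
  set gₙ : ℕ → ℝ → ℝ := fun n s => min (g s) n
  have hgₙ : ∀ n, AntitoneOn (gₙ n) (Ioi 0) := fun n a ha b hb hab =>
    min_le_min_right _ (hg ha hb hab)
  calc ∫⁻ t in Ioi 0, orliczExt Φ (hardyAvg g t)
      = ∫⁻ t in Ioi 0, ⨆ n, orliczExt Φ (hardyAvg (gₙ n) t) :=
        setLIntegral_congr_fun measurableSet_Ioi fun t _ => by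
          rw [hardyAvg_eq_iSup_min hg, hΦ.orliczExt_iSup]
    _ = ⨆ n, ∫⁻ t in Ioi 0, orliczExt Φ (hardyAvg (gₙ n) t) :=
        lintegral_iSup' (fun n => aemeasurable_restrict_of_antitoneOn measurableSet_Ioi
            (hΦ.antitoneOn_orliczExt_hardyAvg (hgₙ n)))
          (ae_of_all _ fun t m n hmn => hΦ.monotone_orliczExt
            (hardyAvg_mono fun s => min_le_min_left _ (Nat.cast_le.2 hmn)))
    _ ≤ ENNReal.ofReal (D / r) * ∫⁻ t in Ioi 0, ENNReal.ofReal (Φ (g t)) := by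
        refine iSup_le fun n => (hΦ.lintegral_orliczExt_hardyAvg_le_of_bounded hr0 hr1 hcontract
          hD0 hD (fun s hs => le_min (hg0 s hs) n.cast_nonneg) (hgₙ n)
          (fun s _ => min_le_right _ _)).trans ?_
        gcongr 1
        refine setLIntegral_mono' measurableSet_Ioi fun t ht => ofReal_le_ofReal ?_
        exact hΦ.monotoneOn (le_min (hg0 t ht) n.cast_nonneg) (hg0 t ht) (min_le_left _ _)

end Contraction

end IsOrliczFunction

/-- the Φ-moment Hardy inequality for nonincreasing nonnegative
functions when `1 < p_Φ ≤ q_Φ < ∞`: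
`∫ Φ(g) ≤ ∫ Φ(t⁻¹∫₀^t g) ≤ C ∫ Φ(g)`, the inequalities holding in `[0,∞]`. -/
theorem statement14 (Φ : ℝ → ℝ) (hΦ : IsOrliczFunction Φ) (pΦ qΦ : ℝ)
    (hMO : HasMatuzewskaOrliczIndices Φ pΦ qΦ) (h1 : 1 < pΦ) (hpΦqΦ : pΦ ≤ qΦ) :
    ∃ C : ℝ, 0 < C ∧ ∀ g : ℝ → ℝ,
      (∀ t ∈ Set.Ioi (0:ℝ), 0 ≤ g t) → AntitoneOn g (Set.Ioi 0) →
      (∫⁻ t in Set.Ioi (0:ℝ), ENNReal.ofReal (Φ (g t))) ≤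
        (∫⁻ t in Set.Ioi (0:ℝ), orliczExt Φ (hardyAvg g t)) ∧
      (∫⁻ t in Set.Ioi (0:ℝ), orliczExt Φ (hardyAvg g t)) ≤
        ENNReal.ofReal C * ∫⁻ t in Set.Ioi (0:ℝ), ENNReal.ofReal (Φ (g t)) := by
  obtain ⟨r, hr0, hr1, hcontract⟩ := hΦ.exists_contraction hMO.1 h1
  obtain ⟨D, hD0, hD⟩ := hΦ.delta2 hMO.2 (by linarith : 0 < qΦ).ne'
  refine ⟨D / r, div_pos hD0 hr0, fun g hg0 hg => ⟨?_, ?_⟩⟩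
  · exact hΦ.lintegral_le_lintegral_orliczExt_hardyAvg hg0 hg
  · exact hΦ.lintegral_orliczExt_hardyAvg_le hr0 hr1.le hcontract hD0.le hD hg0 hg
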